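/- If Re( (h²/N) Σ_{i,j=1}^N (L + hI + iα)^{-2}_{ij} ) = 1, then Re( (h/N) Σ_{i,j=1}^N (L + hI + iα)^{-1}_{ij} ) = 1. -/

import Mathlib

open Matrix BigOperators
open scoped ComplexOrder

/-!
Put `K = L + hI + iα` and `w = K⁻¹𝟙`. Since `K` is complex symmetric, `Σᵢⱼ (K⁻²)ᵢⱼ = wᵀw` and
`Σᵢⱼ (K⁻¹)ᵢⱼ = Σᵢ wᵢ`. Taking real parts in `w* K w = Σᵢ w̄ᵢ` kills the skew part `iα` and gives
`h ‖w‖² ≤ Re Σᵢ wᵢ`. With `w = x + iy` the hypothesis reads `h² (‖x‖² - ‖y‖²) = N`, so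
`N ≤ h² ‖w‖² ≤ h Σᵢ xᵢ`; conversely Cauchy–Schwarz gives
`(h Σᵢ xᵢ)² ≤ N h² ‖x‖² ≤ N h Σᵢ xᵢ`. Hence `h Σᵢ xᵢ = N`.
-/

namespace Matrix

variable {n : Type*} [Fintype n]

lemma re_star_dotProduct_map_ofReal_mulVec (L : Matrix n n ℝ) (v : n → ℂ) :
    (star v ⬝ᵥ (L.map ((↑) : ℝ → ℂ) *ᵥ v)).re
      = (fun k => (v k).re) ⬝ᵥ (L *ᵥ fun k => (v k).re)
        + (fun k => (v k).im) ⬝ᵥ (L *ᵥ fun k => (v k).im) := by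
  simp only [dotProduct, mulVec, Finset.mul_sum, ← Finset.sum_add_distrib, Complex.re_sum]
  refine Finset.sum_congr rfl fun i _ => Finset.sum_congr rfl fun j _ => ?_
  simp only [Pi.star_apply, map_apply, Complex.star_def, Complex.mul_re, Complex.mul_im,
    Complex.conj_re, Complex.conj_im, Complex.ofReal_re, Complex.ofReal_im]
  ring

lemma PosSemidef.map_ofReal {L : Matrix n n ℝ} (hL : L.PosSemidef) :
    (L.map ((↑) : ℝ → ℂ)).PosSemidef := by
  have hH : (L.map ((↑) : ℝ → ℂ)).IsHermitian := hL.1.map _ fun x => by simp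
  refine .of_dotProduct_mulVec_nonneg hH fun v =>
    Complex.nonneg_iff.mpr ⟨?_, (hH.im_star_dotProduct_mulVec_self v).symm⟩
  rw [re_star_dotProduct_map_ofReal_mulVec]
  exact add_nonneg (by simpa using hL.dotProduct_mulVec_nonneg _)
    (by simpa using hL.dotProduct_mulVec_nonneg _)

lemma re_star_dotProduct_self (v : n → ℂ) : (star v ⬝ᵥ v).re = ∑ k, Complex.normSq (v k) := by
  simp only [dotProduct, Complex.re_sum, Pi.star_apply, Complex.star_def, Complex.mul_re,
    Complex.conj_re, Complex.conj_im, Complex.normSq_apply]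
  exact Finset.sum_congr rfl fun k _ => by ring

lemma sum_sum_mul_self_of_isSymm {R : Type*} [CommSemiring R] {A : Matrix n n R}
    (hA : A.IsSymm) : ∑ i, ∑ j, (A * A) i j = (A *ᵥ 1) ⬝ᵥ (A *ᵥ 1) := by
  calc ∑ i, ∑ j, (A * A) i j = 1 ⬝ᵥ ((A * A) *ᵥ 1) := by
        simp only [mulVec, dotProduct, Pi.one_apply, mul_one, one_mul]
    _ = (1 ᵥ* A) ⬝ᵥ (A *ᵥ 1) := by rw [← mulVec_mulVec, dotProduct_mulVec]
    _ = (A *ᵥ 1) ⬝ᵥ (A *ᵥ 1) := by rw [← vecMul_transpose, hA.eq]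

variable [DecidableEq n]

lemma mul_sum_normSq_le_re_star_dotProduct_mulVec {A B : Matrix n n ℂ} (hA : A.PosSemidef)
    (hB : B.IsHermitian) (h : ℝ) (v : n → ℂ) :
    h * ∑ k, Complex.normSq (v k)
      ≤ (star v ⬝ᵥ ((A + (h : ℂ) • 1 + Complex.I • B) *ᵥ v)).re := by
  have hskew : (star v ⬝ᵥ ((Complex.I • B) *ᵥ v)).re = 0 := by
    rw [smul_mulVec, dotProduct_smul, smul_eq_mul, Complex.I_mul_re, neg_eq_zero]
    exact hB.im_star_dotProduct_mulVec_self v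
  have hscalar : (star v ⬝ᵥ (((h : ℂ) • 1 : Matrix n n ℂ) *ᵥ v)).re
      = h * ∑ k, Complex.normSq (v k) := by
    rw [smul_mulVec, one_mulVec, dotProduct_smul, smul_eq_mul, Complex.re_ofReal_mul,
      re_star_dotProduct_self]
  simp only [add_mulVec, dotProduct_add, Complex.add_re, hskew, hscalar]
  have hA_nonneg : 0 ≤ (star v ⬝ᵥ (A *ᵥ v)).re := hA.re_dotProduct_nonneg v
  linarith

lemma isUnit_det_add_smul_one_add_I_smul {A B : Matrix n n ℂ} (hA : A.PosSemidef)
    (hB : B.IsHermitian) {h : ℝ} (hh : 0 < h) :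
    IsUnit (A + (h : ℂ) • 1 + Complex.I • B).det := by
  refine isUnit_iff_ne_zero.mpr fun hdet => ?_
  obtain ⟨v, hv, hKv⟩ := exists_mulVec_eq_zero_iff.mpr hdet
  have hbound := mul_sum_normSq_le_re_star_dotProduct_mulVec hA hB h v
  rw [hKv, dotProduct_zero, Complex.zero_re] at hbound
  have hpos : 0 < ∑ k, Complex.normSq (v k) := by
    obtain ⟨k, hk⟩ := Function.ne_iff.mp hv
    exact Finset.sum_pos' (fun j _ => Complex.normSq_nonneg _)
      ⟨k, Finset.mem_univ k, Complex.normSq_pos.mpr hk⟩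
  nlinarith

end Matrix

open Finset in
lemma mul_re_sum_eq_card_of_sq_mul_re_dotProduct_self_eq_card {ι : Type*} [Fintype ι]
    {w : ι → ℂ} {h : ℝ} (hh : 0 < h)
    (hbound : h * ∑ k, Complex.normSq (w k) ≤ (∑ k, w k).re)
    (hsq : h ^ 2 * (w ⬝ᵥ w).re = Fintype.card ι) :
    h * (∑ k, w k).re = Fintype.card ι := by
  set n : ℝ := (Fintype.card ι : ℝ)
  set T := ∑ k, (w k).re
  set sx := ∑ k, (w k).re ^ 2
  set sy := ∑ k, (w k).im ^ 2
  have hT : (∑ k, w k).re = T := Complex.re_sum _ _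
  have hnorm : ∑ k, Complex.normSq (w k) = sx + sy := by
    simp only [Complex.normSq_apply, sx, sy, ← sum_add_distrib, sq]
  have hdot : (w ⬝ᵥ w).re = sx - sy := by
    simp only [dotProduct, Complex.re_sum, Complex.mul_re, sx, sy, ← sum_sub_distrib, sq]
  have hCS : T ^ 2 ≤ n * sx := sq_sum_le_card_mul_sum_sq
  have hn : 0 ≤ n := Nat.cast_nonneg _
  have hsy : 0 ≤ sy := sum_nonneg fun k _ => sq_nonneg _
  rw [hT, hnorm] at hbound
  rw [hdot] at hsq
  rw [hT]
  have hlower : n ≤ h * T := by nlinarith [mul_le_mul_of_nonneg_left hbound hh.le]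
  have hsx : h ^ 2 * sx ≤ h * T := by nlinarith [mul_le_mul_of_nonneg_left hbound hh.le]
  have hupper : (h * T) ^ 2 ≤ n * (h * T) := by
    calc (h * T) ^ 2 = h ^ 2 * T ^ 2 := by ring
      _ ≤ h ^ 2 * (n * sx) := by gcongr
      _ = n * (h ^ 2 * sx) := by ring
      _ ≤ n * (h * T) := by gcongr
  nlinarith

lemma mul_re_sum_inv_eq_card {n : Type*} [Fintype n] [DecidableEq n] {A B : Matrix n n ℂ}
    (hA : A.PosSemidef) (hA' : A.IsSymm) (hB : B.IsHermitian) (hB' : B.IsSymm) {h : ℝ}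
    (hh : 0 < h)
    (hsq : h ^ 2 * (∑ i, ∑ j, ((A + (h : ℂ) • 1 + Complex.I • B)⁻¹
      * (A + (h : ℂ) • 1 + Complex.I • B)⁻¹) i j).re = Fintype.card n) :
    h * (∑ i, ∑ j, (A + (h : ℂ) • 1 + Complex.I • B)⁻¹ i j).re = Fintype.card n := by
  set K := A + (h : ℂ) • 1 + Complex.I • B with hK_def
  have hK : K.IsSymm := (hA'.add (isSymm_one.smul _)).add (hB'.smul _)
  set w := K⁻¹ *ᵥ 1
  have hKw : K *ᵥ w = 1 := by
    rw [mulVec_mulVec, mul_nonsing_inv _ (isUnit_det_add_smul_one_add_I_smul hA hB hh),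
      one_mulVec]
  have hbound : h * ∑ k, Complex.normSq (w k) ≤ (∑ k, w k).re := by
    simpa only [← hK_def, hKw, dotProduct_one, Complex.re_sum, Pi.star_apply, Complex.star_def,
      Complex.conj_re] using mul_sum_normSq_le_re_star_dotProduct_mulVec hA hB h w
  have hsum : ∑ i, ∑ j, K⁻¹ i j = ∑ k, w k := by
    simp only [w, mulVec, dotProduct, Pi.one_apply, mul_one]
  rw [sum_sum_mul_self_of_isSymm hK.inv] at hsq
  rw [hsum]
  exact mul_re_sum_eq_card_of_sq_mul_re_dotProduct_self_eq_card hh hbound hsq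

theorem stationarity_first_consequence_general (N : ℕ)
    (L : Matrix (Fin N) (Fin N) ℝ) (hLpsd : L.PosSemidef)
    (h : ℝ) (hh : 0 < h) (α : Fin N → ℝ)
    (hyp : (((h : ℂ) ^ 2 / (N : ℂ)) * ∑ i, ∑ j,
        (((L.map (fun x => (x : ℂ)) + (h : ℂ) • 1
            + Complex.I • Matrix.diagonal (fun i => (α i : ℂ)))⁻¹
          * (L.map (fun x => (x : ℂ)) + (h : ℂ) • 1
            + Complex.I • Matrix.diagonal (fun i => (α i : ℂ)))⁻¹) i j)).re = 1) :
    (((h : ℂ) / (N : ℂ)) * ∑ i, ∑ j,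
        (L.map (fun x => (x : ℂ)) + (h : ℂ) • 1
          + Complex.I • Matrix.diagonal (fun i => (α i : ℂ)))⁻¹ i j).re = 1 := by
  rw [← Complex.ofReal_pow, ← Complex.ofReal_natCast, ← Complex.ofReal_div,
    Complex.re_ofReal_mul] at hyp
  rw [← Complex.ofReal_natCast, ← Complex.ofReal_div, Complex.re_ofReal_mul]
  have hN : (N : ℝ) ≠ 0 := by
    rintro hN
    simp [hN] at hyp
  rw [div_mul_eq_mul_div, div_eq_one_iff_eq hN] at hyp ⊢
  have hD : (diagonal fun i => (α i : ℂ)).IsHermitian := by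
    simp [IsHermitian, diagonal_conjTranspose]
  simpa only [Fintype.card_fin] using mul_re_sum_inv_eq_card hLpsd.map_ofReal
    ((isHermitian_iff_isSymm.mp hLpsd.1).map _) hD (isSymm_diagonal _) hh
    (by simpa only [Fintype.card_fin] using hyp)

/-- If `Re((h²/N) Σᵢⱼ (L+hI+iα)⁻²ᵢⱼ) = 1` then `Re((h/N) Σᵢⱼ (L+hI+iα)⁻¹ᵢⱼ) = 1`. -/
theorem stationarity_first_consequence (N : ℕ) (hN : 0 < N)
    (L : Matrix (Fin N) (Fin N) ℝ) (hLsymm : L.IsSymm) (hLpsd : L.PosSemidef)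
    (h : ℝ) (hh : 0 < h) (α : Fin N → ℝ)
    (hyp : (((h : ℂ) ^ 2 / (N : ℂ)) * ∑ i, ∑ j,
        (((L.map (fun x => (x : ℂ)) + (h : ℂ) • 1
            + Complex.I • Matrix.diagonal (fun i => (α i : ℂ)))⁻¹
          * (L.map (fun x => (x : ℂ)) + (h : ℂ) • 1
            + Complex.I • Matrix.diagonal (fun i => (α i : ℂ)))⁻¹) i j)).re = 1) :
    (((h : ℂ) / (N : ℂ)) * ∑ i, ∑ j,
        (L.map (fun x => (x : ℂ)) + (h : ℂ) • 1
          + Complex.I • Matrix.diagonal (fun i => (α i : ℂ)))⁻¹ i j).re = 1 :=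
  stationarity_first_consequence_general N L hLpsd h hh α hyp
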